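/- arXiv:1901.05036 — 4 statements merged into one kernel-verified Lean document; each statement's English description precedes it below -/
import Mathlib

section
/- Let $\nu$ be a compactly supported Borel probability measure on $\mathbb{R}$, let $I = \int \lambda \, d\nu(\lambda)$, and let $(a_1, b_1)$ be an open interval containing $I$. Then there exists a subinterval $(a_2, b_2) \subseteq (a_1, b_1)$ containing $I$ such that $\int s_{a_2,b_2}(\lambda)\, d\nu(\lambda) = I$, where $s_{\alpha,\beta}(u) = \max(\alpha, \min(\beta, u))$ is the cut-off function. -/
/-!
Write `F(a, b) = ∫ s_{a,b} dν` and `I = ∫ λ dν`. Since `|s_{a,b} - s_{a',b'}| ≤ max |a - a'| |b - b'|`,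
`F` is continuous, and pointwise `s_{a₁,I} ≤ I ≤ s_{I,b₁}`, so `F(a₁, I) ≤ I ≤ F(I, b₁)`.
If either inequality is an equality then `ν` is concentrated on one side of its mean, hence
at `I` itself, and `(a₁, b₁)` itself works. Otherwise the intermediate value theorem,
applied to `a ↦ F(a, b₁)` on `[a₁, I]` when `F(a₁, b₁) ≤ I` and to `b ↦ F(a₁, b)` on `[I, b₁]`
when `I ≤ F(a₁, b₁)`, moves one endpoint while keeping `I` strictly inside.
-/

open MeasureTheory

section ConstIntegral

variable {α : Type*} [MeasurableSpace α] {μ : Measure α} [IsProbabilityMeasure μ] {f : α → ℝ}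
  {c : ℝ}

lemma ae_eq_const_of_ae_le_of_le_integral (hf : Integrable f μ) (hle : ∀ᵐ x ∂μ, f x ≤ c)
    (hc : c ≤ ∫ x, f x ∂μ) : ∀ᵐ x ∂μ, f x = c :=
  (integral_eq_iff_of_ae_le hf (integrable_const c) hle).1
    (le_antisymm (integral_mono_ae hf (integrable_const c) hle) (by simpa using hc))

lemma ae_eq_const_of_ae_ge_of_integral_le (hf : Integrable f μ) (hge : ∀ᵐ x ∂μ, c ≤ f x)
    (hc : ∫ x, f x ∂μ ≤ c) : ∀ᵐ x ∂μ, f x = c :=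
  ((integral_eq_iff_of_ae_le (integrable_const c) hf hge).1
    (le_antisymm (integral_mono_ae (integrable_const c) hf hge) (by simpa using hc))).mono
    fun _ hx => hx.symm

end ConstIntegral

noncomputable def cutoffIntegral (ν : Measure ℝ) (a b : ℝ) : ℝ :=
  ∫ x, max a (min b x) ∂ν

namespace cutoffIntegral

variable {ν : Measure ℝ}

lemma integrable_max_min [IsFiniteMeasure ν] (a b : ℝ) :
    Integrable (fun x => max a (min b x)) ν :=
  .of_bound (by fun_prop) (max |a| |b|) (ae_of_all _ fun _ => by rw [Real.norm_eq_abs]; grind)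

lemma lipschitzWith [IsProbabilityMeasure ν] :
    LipschitzWith 1 fun p : ℝ × ℝ => cutoffIntegral ν p.1 p.2 := by
  refine LipschitzWith.of_dist_le_mul fun p q => ?_
  have hpointwise (x : ℝ) : ‖max p.1 (min p.2 x) - max q.1 (min q.2 x)‖ ≤ dist p q :=
    calc |max p.1 (min p.2 x) - max q.1 (min q.2 x)|
        ≤ max |p.1 - q.1| |min p.2 x - min q.2 x| := abs_max_sub_max_le_max _ _ _ _
      _ ≤ max |p.1 - q.1| |p.2 - q.2| :=
        max_le_max le_rfl (by simpa using abs_min_sub_min_le_max p.2 x q.2 x)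
      _ = dist p q := by rw [Prod.dist_eq, Real.dist_eq, Real.dist_eq]
  rw [NNReal.coe_one, one_mul, Real.dist_eq, cutoffIntegral, cutoffIntegral,
    ← integral_sub (integrable_max_min _ _) (integrable_max_min _ _)]
  simpa using norm_integral_le_of_norm_le_const (ae_of_all ν hpointwise)

lemma continuous_left [IsProbabilityMeasure ν] (b : ℝ) :
    Continuous fun a => cutoffIntegral ν a b :=
  lipschitzWith.continuous.comp (continuous_id.prodMk continuous_const)

lemma continuous_right [IsProbabilityMeasure ν] (a : ℝ) :
    Continuous fun b => cutoffIntegral ν a b :=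
  lipschitzWith.continuous.comp (continuous_const.prodMk continuous_id)

lemma eq_of_ae_eq {a b c : ℝ} [IsProbabilityMeasure ν] (h : ∀ᵐ x ∂ν, x = c) (hac : a ≤ c)
    (hcb : c ≤ b) : cutoffIntegral ν a b = c := by
  rw [cutoffIntegral, integral_congr_ae (h.mono fun x hx => congrArg (max a <| min b ·) hx)]
  simp [hac, hcb]

lemma ae_le_of_le_left {b c : ℝ} [IsProbabilityMeasure ν] (hcb : c < b)
    (h : cutoffIntegral ν c b ≤ c) : ∀ᵐ x ∂ν, x ≤ c := by
  filter_upwards [ae_eq_const_of_ae_ge_of_integral_le (integrable_max_min c b)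
    (ae_of_all _ fun _ => le_max_left _ _) h] with x hx
  contrapose! hx
  exact (lt_min hcb hx).trans_le (le_max_right _ _) |>.ne'

lemma ae_ge_of_right_le {a c : ℝ} [IsProbabilityMeasure ν] (hac : a < c)
    (h : c ≤ cutoffIntegral ν a c) : ∀ᵐ x ∂ν, c ≤ x := by
  filter_upwards [ae_eq_const_of_ae_le_of_le_integral (integrable_max_min a c)
    (ae_of_all _ fun _ => max_le hac.le (min_le_left _ _)) h] with x hx
  contrapose! hx
  exact (max_lt hac (min_le_right _ _ |>.trans_lt hx)).ne

end cutoffIntegral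

open cutoffIntegral in
theorem exists_cutoffIntegral_eq_integral {ν : Measure ℝ} [IsProbabilityMeasure ν]
    (hid : Integrable (fun x => x) ν) {a₁ b₁ : ℝ} (ha : a₁ < ∫ x, x ∂ν) (hb : ∫ x, x ∂ν < b₁) :
    ∃ a₂ b₂ : ℝ, a₁ ≤ a₂ ∧ b₂ ≤ b₁ ∧ a₂ < ∫ x, x ∂ν ∧ ∫ x, x ∂ν < b₂ ∧
      cutoffIntegral ν a₂ b₂ = ∫ x, x ∂ν := by
  set I := ∫ x, x ∂ν
  by_cases hdirac : ∀ᵐ x ∂ν, x = I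
  · exact ⟨a₁, b₁, le_rfl, le_rfl, ha, hb, eq_of_ae_eq hdirac ha.le hb.le⟩
  have hleft : I < cutoffIntegral ν I b₁ := lt_of_not_ge fun h =>
    hdirac (ae_eq_const_of_ae_le_of_le_integral hid (ae_le_of_le_left hb h) le_rfl)
  have hright : cutoffIntegral ν a₁ I < I := lt_of_not_ge fun h =>
    hdirac (ae_eq_const_of_ae_ge_of_integral_le hid (ae_ge_of_right_le ha h) le_rfl)
  rcases le_total (cutoffIntegral ν a₁ b₁) I with hle | hge
  · obtain ⟨a₂, ⟨ha₁a₂, ha₂I⟩, heq⟩ :=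
      intermediate_value_Ico ha.le (continuous_left b₁).continuousOn ⟨hle, hleft⟩
    exact ⟨a₂, b₁, ha₁a₂, le_rfl, ha₂I, hb, heq⟩
  · obtain ⟨b₂, ⟨hIb₂, hb₂b₁⟩, heq⟩ :=
      intermediate_value_Ioc hb.le (continuous_right a₁).continuousOn ⟨hright, hge⟩
    exact ⟨a₁, b₂, le_rfl, hb₂b₁, ha, hIb₂, heq⟩

theorem cutoff_mean_interval (ν : Measure ℝ) [IsProbabilityMeasure ν]
    (M : ℝ) (hsupp : ν {x : ℝ | M < |x|} = 0)
    (a₁ b₁ : ℝ) (ha : a₁ < ∫ lam, lam ∂ν) (hb : (∫ lam, lam ∂ν) < b₁) :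
    ∃ a₂ b₂ : ℝ, a₁ ≤ a₂ ∧ b₂ ≤ b₁ ∧ a₂ < ∫ lam, lam ∂ν ∧ (∫ lam, lam ∂ν) < b₂ ∧
      ∫ lam, max a₂ (min b₂ lam) ∂ν = ∫ lam, lam ∂ν := by
  have hbounded : ∀ᵐ x ∂ν, ‖x‖ ≤ M := by
    simpa [ae_iff, Real.norm_eq_abs] using hsupp
  exact exists_cutoffIntegral_eq_integral (.of_bound aestronglyMeasurable_id M hbounded) ha hb
end

section
/- Let $g \in BV_{loc}(\mathbb{R})$ and $f \in C(\mathbb{R})$. Define $T_g(f)(u) = g(u-)f(u) - \int_0^u f(s)\,dg(s)$, where $g(u-)$ is the left limit of $g$ at $u$ and the integral is the Lebesgue–Stieltjes integral over $[0,u)$ for $u > 0$ (with sign convention $-\int_{[u,0)}$ for $u \le 0$). Then the function $u \mapsto T_g(f)(u)$ is continuous on $\mathbb{R}$, even when $g$ is discontinuous. -/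
/-!
It suffices to treat a monotone `g` with its measure `μ`. As `u ↑ x`, `g(u-) → g(x-)` and
`∫_{[u,x)} f dμ → 0`, so `T_g f` is left-continuous. As `u ↓ x`, `g(u-) → g(x+)` while
`∫_{[x,u)} f dμ → f(x) μ{x} = f(x) (g(x+) - g(x-))`: the jump of the first term is exactly the
contribution of the atom of `μ` at `x`.
-/

open MeasureTheory Function Set Filter Topology

section SetIntegralIco

variable {E : Type*} [NormedAddCommGroup E] {μ : Measure ℝ} {f : ℝ → E}

theorem MeasureTheory.LocallyIntegrable.integrableOn_Ico (hf : LocallyIntegrable f μ) (a b : ℝ) :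
    IntegrableOn f (Ico a b) μ :=
  (hf.integrableOn_isCompact isCompact_Icc).mono_set Ico_subset_Icc_self

variable [NormedSpace ℝ E]

theorem tendsto_setIntegral_Ico_nhdsLT {a x : ℝ} (hf : IntegrableOn f (Ico a x) μ) (hax : a < x) :
    Tendsto (fun u => ∫ s in Ico u x, f s ∂μ) (𝓝[<] x) (𝓝 0) := by
  have : (atTop : Filter (Iio x)).IsCountablyGenerated := by
    rw [← comap_coe_Iio_nhdsLT x]; infer_instance
  have h := tendsto_setIntegral_of_antitone (μ := μ) (f := f)
    (s := fun i : Iio x => Ico (i : ℝ) x) (fun _ => measurableSet_Ico)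
    (fun _ _ hij => Ico_subset_Ico_left hij) ⟨⟨a, hax⟩, hf⟩
  have hempty : (⋂ i : Iio x, Ico (i : ℝ) x) = ∅ :=
    eq_empty_of_forall_notMem fun s hs => by
      have hsx : s < x := (mem_iInter.1 hs ⟨a, hax⟩).2
      have hmid : (s + x) / 2 ≤ s := (mem_iInter.1 hs ⟨(s + x) / 2, by simp; linarith⟩).1
      linarith
  rw [hempty, setIntegral_empty] at h
  rwa [← tendsto_comp_coe_Iio_atTop]

theorem tendsto_setIntegral_Ico_nhdsGT [CompleteSpace E] {b x : ℝ}
    (hf : IntegrableOn f (Ico x b) μ) (hxb : x < b) :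
    Tendsto (fun u => ∫ s in Ico x u, f s ∂μ) (𝓝[>] x) (𝓝 (μ.real {x} • f x)) := by
  -- `atTop` on the order dual of `Ioi x` is `atBot` on `Ioi x`, which is `𝓝[>] x`.
  have : (atTop : Filter (Ioi x)ᵒᵈ).IsCountablyGenerated := by
    change (atBot : Filter (Ioi x)).IsCountablyGenerated
    rw [← comap_coe_Ioi_nhdsGT x]; infer_instance
  have h := tendsto_setIntegral_of_antitone (μ := μ) (f := f)
    (s := fun i : (Ioi x)ᵒᵈ => Ico x ((OrderDual.ofDual i : Ioi x) : ℝ))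
    (fun _ => measurableSet_Ico) (fun _ _ hij => Ico_subset_Ico_right hij)
    ⟨OrderDual.toDual ⟨b, hxb⟩, hf⟩
  have hsingleton : (⋂ i : (Ioi x)ᵒᵈ, Ico x ((OrderDual.ofDual i : Ioi x) : ℝ)) = {x} := by
    refine Subset.antisymm (fun s hs => ?_) fun s hs => ?_
    · have hxs : x ≤ s := (mem_iInter.1 hs (OrderDual.toDual ⟨b, hxb⟩)).1
      by_contra hne
      have hlt : x < s := lt_of_le_of_ne hxs (Ne.symm hne)
      simpa using mem_iInter.1 hs (OrderDual.toDual ⟨s, hlt⟩)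
    · rw [mem_singleton_iff.1 hs]
      exact mem_iInter.2 fun i => ⟨le_rfl, (OrderDual.ofDual i).2⟩
  rw [hsingleton, integral_singleton] at h
  rwa [← tendsto_comp_coe_Ioi_atBot]

noncomputable def icoPrimitive (f : ℝ → E) (μ : Measure ℝ) (u : ℝ) : E :=
  if 0 ≤ u then ∫ s in Ico 0 u, f s ∂μ else -∫ s in Ico u 0, f s ∂μ

theorem icoPrimitive_sub (hf : LocallyIntegrable f μ) {a b : ℝ} (hab : a ≤ b) :
    icoPrimitive f μ b - icoPrimitive f μ a = ∫ s in Ico a b, f s ∂μ := by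
  have split : ∀ {a b c : ℝ}, a ≤ b → b ≤ c →
      ∫ s in Ico a c, f s ∂μ = (∫ s in Ico a b, f s ∂μ) + ∫ s in Ico b c, f s ∂μ :=
    fun hab hbc => by
      rw [← Ico_union_Ico_eq_Ico hab hbc, setIntegral_union Ico_disjoint_Ico_same
        measurableSet_Ico (hf.integrableOn_Ico _ _) (hf.integrableOn_Ico _ _)]
  unfold icoPrimitive
  split_ifs with hb ha ha
  · rw [split ha hab]; abel
  · rw [split (not_le.1 ha).le hb]; abel
  · exact absurd (ha.trans hab) hb
  · rw [split hab (not_le.1 hb).le]; abel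

theorem tendsto_icoPrimitive_nhdsLT (hf : LocallyIntegrable f μ) (x : ℝ) :
    Tendsto (icoPrimitive f μ) (𝓝[<] x) (𝓝 (icoPrimitive f μ x)) := by
  have h := tendsto_const_nhds (x := icoPrimitive f μ x) |>.sub
    (tendsto_setIntegral_Ico_nhdsLT (hf.integrableOn_Ico (x - 1) x) (sub_one_lt x))
  rw [sub_zero] at h
  refine h.congr' ?_
  filter_upwards [self_mem_nhdsWithin] with u hu
  rw [← icoPrimitive_sub hf (le_of_lt hu), sub_sub_cancel]

theorem tendsto_icoPrimitive_nhdsGT [CompleteSpace E] (hf : LocallyIntegrable f μ) (x : ℝ) :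
    Tendsto (icoPrimitive f μ) (𝓝[>] x) (𝓝 (icoPrimitive f μ x + μ.real {x} • f x)) := by
  refine (tendsto_const_nhds.add
    (tendsto_setIntegral_Ico_nhdsGT (hf.integrableOn_Ico x (x + 1)) (lt_add_one x))).congr' ?_
  filter_upwards [self_mem_nhdsWithin] with u hu
  rw [← icoPrimitive_sub hf (le_of_lt hu), add_sub_cancel]

end SetIntegralIco

theorem Monotone.continuousWithinAt_leftLim_Iio {g : ℝ → ℝ} (hg : Monotone g) (x : ℝ) :
    ContinuousWithinAt (leftLim g) (Iio x) x := by
  simpa [ContinuousWithinAt, leftLim_leftLim (hg.tendsto_leftLim x)] using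
    hg.leftLim.tendsto_leftLim x

theorem Monotone.tendsto_leftLim_nhdsGT {g : ℝ → ℝ} (hg : Monotone g) (x : ℝ) :
    Tendsto (leftLim g) (𝓝[>] x) (𝓝 (rightLim g x)) := by
  simpa [rightLim_leftLim (hg.tendsto_rightLim x)] using hg.leftLim.tendsto_rightLim x

theorem leftLim_sub_of_monotone {g₁ g₂ : ℝ → ℝ} (h₁ : Monotone g₁) (h₂ : Monotone g₂) (x : ℝ) :
    leftLim (g₁ - g₂) x = leftLim g₁ x - leftLim g₂ x :=
  leftLim_eq_of_tendsto (h₁.tendsto_leftLim x |>.sub (h₂.tendsto_leftLim x))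

section LeftLimStieltjes

variable {g : ℝ → ℝ} {μ : Measure ℝ}
  (hμ : ∀ a b : ℝ, a ≤ b → μ (Ico a b) = ENNReal.ofReal (leftLim g b - leftLim g a))
include hμ

theorem measure_Ico_lt_top_of_leftLim (a b : ℝ) : μ (Ico a b) < ⊤ := by
  rcases le_or_gt a b with hab | hba
  · exact hμ a b hab ▸ ENNReal.ofReal_lt_top
  · simp [Ico_eq_empty_of_le hba.le]

theorem isLocallyFiniteMeasure_of_leftLim : IsLocallyFiniteMeasure μ :=
  ⟨fun x => ⟨Ico (x - 1) (x + 1), Ico_mem_nhds (sub_one_lt x) (lt_add_one x),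
    measure_Ico_lt_top_of_leftLim hμ _ _⟩⟩

theorem measureReal_Ico_of_leftLim (hg : Monotone g) {a b : ℝ} (hab : a ≤ b) :
    μ.real (Ico a b) = leftLim g b - leftLim g a := by
  rw [measureReal_def, hμ a b hab, ENNReal.toReal_ofReal (sub_nonneg.2 (hg.leftLim hab))]

theorem measureReal_singleton_of_leftLim (hg : Monotone g) (x : ℝ) :
    μ.real {x} = rightLim g x - leftLim g x := by
  have hone : IntegrableOn (fun _ => (1 : ℝ)) (Ico x (x + 1)) μ :=
    integrableOn_const (measure_Ico_lt_top_of_leftLim hμ _ _).ne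
  have h := tendsto_setIntegral_Ico_nhdsGT hone (lt_add_one x)
  simp only [setIntegral_const, smul_eq_mul, mul_one] at h
  refine tendsto_nhds_unique h ((hg.tendsto_leftLim_nhdsGT x).sub_const _ |>.congr' ?_)
  filter_upwards [self_mem_nhdsWithin] with u hu
  exact (measureReal_Ico_of_leftLim hμ hg (le_of_lt hu)).symm

theorem continuous_leftLim_mul_sub_icoPrimitive (hg : Monotone g) {f : ℝ → ℝ}
    (hf : Continuous f) : Continuous fun u => leftLim g u * f u - icoPrimitive f μ u := by
  have := isLocallyFiniteMeasure_of_leftLim hμ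
  have hfμ : LocallyIntegrable f μ := hf.locallyIntegrable
  refine continuous_iff_continuousAt.2 fun x => continuousAt_iff_continuous_left'_right'.2 ⟨?_, ?_⟩
  · exact ((hg.continuousWithinAt_leftLim_Iio x).mul hf.continuousWithinAt).sub
      (tendsto_icoPrimitive_nhdsLT hfμ x)
  · have h := ((hg.tendsto_leftLim_nhdsGT x).mul (hf.continuousWithinAt (s := Ioi x))).sub
      (tendsto_icoPrimitive_nhdsGT hfμ x)
    have hjump : rightLim g x * f x - (icoPrimitive f μ x + (rightLim g x - leftLim g x) * f x)
        = leftLim g x * f x - icoPrimitive f μ x := by ring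
    rwa [measureReal_singleton_of_leftLim hμ hg, smul_eq_mul, hjump] at h

end LeftLimStieltjes

/-- Continuity of `T_g(f)(u) = g(u-) f(u) - ∫_0^u f dg` for `g` locally of bounded
variation (written as a difference `g₁ - g₂` of monotone functions, with `μ₁, μ₂` the
associated Lebesgue–Stieltjes measures, normalized by `μᵢ[a,b) = gᵢ(b-) - gᵢ(a-)`),
and `f` continuous.  The integral `∫_0^u f dg` is over `[0,u)` for `u > 0`, with the
sign convention `-∫_{[u,0)}` for `u ≤ 0`. -/
theorem Tg_continuous (g g₁ g₂ f : ℝ → ℝ) (hg : g = g₁ - g₂)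
    (h₁ : Monotone g₁) (h₂ : Monotone g₂)
    (μ₁ μ₂ : Measure ℝ)
    (hμ₁ : ∀ a b : ℝ, a ≤ b →
      μ₁ (Set.Ico a b) = ENNReal.ofReal (leftLim g₁ b - leftLim g₁ a))
    (hμ₂ : ∀ a b : ℝ, a ≤ b →
      μ₂ (Set.Ico a b) = ENNReal.ofReal (leftLim g₂ b - leftLim g₂ a))
    (hf : Continuous f) :
    Continuous (fun u : ℝ =>
      leftLim g u * f u -
        (if 0 ≤ u then (∫ s in Set.Ico (0:ℝ) u, f s ∂μ₁) - ∫ s in Set.Ico (0:ℝ) u, f s ∂μ₂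
         else -((∫ s in Set.Ico u (0:ℝ), f s ∂μ₁) - ∫ s in Set.Ico u (0:ℝ), f s ∂μ₂))) := by
  convert (continuous_leftLim_mul_sub_icoPrimitive hμ₁ h₁ hf).sub
    (continuous_leftLim_mul_sub_icoPrimitive hμ₂ h₂ hf) using 2 with u
  simp only [hg, leftLim_sub_of_monotone h₁ h₂, icoPrimitive, Pi.sub_apply]
  split_ifs <;> ring
end

section
/- Let $\mu$ be a nonnegative locally finite Borel measure on $\Pi = \mathbb{R}_+ \times \mathbb{R}^n$ which is periodic in $x$ with lattice $\mathbb{Z}^n$. Then for every $\alpha \in C_0(\mathbb{R}_+)$ and every $\beta \in C_0(\mathbb{R}^n)$ with $\int \beta(y)\,dy = 1$, one has $\lim_{k\to\infty} k^{-n} \int_\Pi \alpha(t)\beta(x/k)\,d\mu(t,x) = \int_{\mathbb{R}_+ \times \mathbb{T}^n} \alpha(t)\,d\mu(t,x)$, where on the right $\mu$ is regarded as a measure on $\mathbb{R}_+ \times \mathbb{T}^n$ via periodicity. -/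
/-!
Tile `ℝ^n` by the translates `Box n + e`, `e ∈ ℤ^n`. Periodicity of `μ` folds
`∫ α(t) β(x/k) dμ` onto `ℝ × Box n` as `∫ α(t) ∑_e β((x + e)/k) dμ`, a finite sum because `β`
has compact support. Folding Lebesgue measure in the same way gives
`k^n ∫ β = ∑_e ∫_{Box n} β((u + x + e)/k) du`, so by uniform continuity of `β` the function
`x ↦ k^{-n} ∑_e β((x + e)/k)` is a Riemann sum converging to `∫ β` uniformly on `Box n`, and the
limit passes under the integral. As `α` vanishes on `t ≤ 0`, only `(0, ∞) × Box n` contributes.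
-/

open MeasureTheory Filter

/-- Fundamental domain `[0,1)^n` of the torus `ℝ^n/ℤ^n`. -/
def Box (n : ℕ) : Set (Fin n → ℝ) := Set.univ.pi fun _ => Set.Ico (0:ℝ) 1

open Topology

section

variable {n : ℕ}

theorem measurableSet_box : MeasurableSet (Box n) :=
  .univ_pi fun _ => measurableSet_Ico

theorem volume_box : volume (Box n) = 1 := by
  simp [Box, volume_pi_pi, Real.volume_Ico]

theorem mem_box_iff_floor_eq_zero {x : Fin n → ℝ} : x ∈ Box n ↔ ∀ i, ⌊x i⌋ = 0 := by
  simp [Box, Int.floor_eq_zero_iff]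

theorem box_subset_Icc : Box n ⊆ Set.Icc 0 1 :=
  fun _ hx => ⟨fun i => (hx i trivial).1, fun i => (hx i trivial).2.le⟩

theorem norm_le_one_of_mem_box {x : Fin n → ℝ} (hx : x ∈ Box n) : ‖x‖ ≤ 1 :=
  (pi_norm_le_iff_of_nonneg zero_le_one).2 fun i => by
    rw [Real.norm_eq_abs, abs_le]
    exact ⟨by linarith [(hx i trivial).1], (hx i trivial).2.le⟩

section Unfolding

variable {γ : Type*} [MeasurableSpace γ] {ν : Measure γ} {π : γ → Fin n → ℝ}
  {T : (Fin n → ℤ) → γ → γ}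

theorem integral_eq_tsum_setIntegral_box (hπ : Measurable π)
    (hT : ∀ e, MeasurePreserving (T e) ν ν) (hTemb : ∀ e, MeasurableEmbedding (T e))
    (hπT : ∀ e z, π (T e z) = π z + Int.cast ∘ e) {F : γ → ℝ} (hF : Integrable F ν) :
    ∫ z, F z ∂ν = ∑' e, ∫ z in π ⁻¹' Box n, F (T e z) ∂ν := by
  set cell : γ → Fin n → ℤ := fun z i => ⌊π z i⌋
  have hcell : Measurable cell :=
    measurable_pi_lambda _ fun i => ((measurable_pi_apply i).comp hπ).floor
  have hpre (e : Fin n → ℤ) : T e ⁻¹' (cell ⁻¹' {e}) = π ⁻¹' Box n := by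
    ext z
    simp only [Set.mem_preimage, Set.mem_singleton_iff, funext_iff, cell, hπT, Pi.add_apply,
      Function.comp_apply, Int.floor_add_intCast, mem_box_iff_floor_eq_zero]
    exact forall_congr' fun i => by omega
  calc ∫ z, F z ∂ν = ∑' e, ∫ z in cell ⁻¹' {e}, F z ∂ν := by
        rw [← integral_iUnion (fun e => hcell (measurableSet_singleton e))
          (pairwise_disjoint_fiber cell) (by simpa using hF.integrableOn),
          ← Set.preimage_iUnion, Set.iUnion_of_singleton, Set.preimage_univ, Measure.restrict_univ]
    _ = ∑' e, ∫ z in π ⁻¹' Box n, F (T e z) ∂ν := tsum_congr fun e => by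
        rw [← hpre e, (hT e).setIntegral_preimage_emb (hTemb e)]

theorem integral_eq_setIntegral_box_sum (hπ : Measurable π)
    (hT : ∀ e, MeasurePreserving (T e) ν ν) (hTemb : ∀ e, MeasurableEmbedding (T e))
    (hπT : ∀ e z, π (T e z) = π z + Int.cast ∘ e) {F : γ → ℝ} (hF : Integrable F ν)
    {N : Finset (Fin n → ℤ)} (hN : ∀ e ∉ N, ∀ z ∈ π ⁻¹' Box n, F (T e z) = 0) :
    ∫ z, F z ∂ν = ∫ z in π ⁻¹' Box n, ∑ e ∈ N, F (T e z) ∂ν := by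
  rw [integral_eq_tsum_setIntegral_box hπ hT hTemb hπT hF,
    tsum_eq_sum fun e he => setIntegral_eq_zero_of_forall_eq_zero (hN e he),
    integral_finsetSum]
  exact fun e _ => ((hT e).integrable_comp_of_integrable hF).integrableOn

end Unfolding

noncomputable def latticeCube (n m : ℕ) : Finset (Fin n → ℤ) :=
  Fintype.piFinset fun _ => Finset.Icc (-(m : ℤ)) m

theorem card_latticeCube (m : ℕ) : (latticeCube n m).card = (2 * m + 1) ^ n := by
  rw [latticeCube, Fintype.card_piFinset, Finset.prod_const, Finset.card_univ, Fintype.card_fin,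
    Int.card_Icc]
  congr 1
  omega

theorem card_latticeCube_le {R k : ℕ} (hk : 1 ≤ k) :
    ((latticeCube n ((R + 2) * k)).card : ℝ) ≤ (3 * ((R : ℝ) + 2)) ^ n * (k : ℝ) ^ n := by
  have hk1 : (1 : ℝ) ≤ k := by exact_mod_cast hk
  rw [card_latticeCube, ← mul_pow]
  push_cast
  gcongr
  nlinarith

theorem add_one_le_norm_of_notMem_latticeCube {m : ℕ} {e : Fin n → ℤ}
    (he : e ∉ latticeCube n m) : (m : ℝ) + 1 ≤ ‖(Int.cast ∘ e : Fin n → ℝ)‖ := by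
  simp only [latticeCube, Fintype.mem_piFinset, Finset.mem_Icc, not_forall] at he
  obtain ⟨i, hi⟩ := he
  have hm : (m : ℤ) + 1 ≤ |e i| := by rcases abs_cases (e i) with ⟨h, _⟩ | ⟨h, _⟩ <;> omega
  calc (m : ℝ) + 1 ≤ |(e i : ℝ)| := by exact_mod_cast hm
    _ ≤ ‖(Int.cast ∘ e : Fin n → ℝ)‖ := norm_le_pi_norm (Int.cast ∘ e : Fin n → ℝ) i

theorem HasCompactSupport.exists_nat_forall_le_norm {E : Type*} [NormedAddCommGroup E]
    {f : E → ℝ} (hf : HasCompactSupport f) : ∃ R : ℕ, ∀ y, (R : ℝ) ≤ ‖y‖ → f y = 0 := by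
  obtain ⟨C, hC⟩ := isBounded_iff_forall_norm_le.1 hf.isBounded
  refine ⟨⌈C⌉₊ + 1, fun y hy => image_eq_zero_of_notMem_tsupport fun hmem => ?_⟩
  have := Nat.le_ceil C
  push_cast at hy
  linarith [hC y hmem]

section LatticeSum

variable {β : (Fin n → ℝ) → ℝ} {R : ℕ}

theorem comp_smul_add_eq_zero_of_notMem_latticeCube (hR : ∀ y, (R : ℝ) ≤ ‖y‖ → β y = 0)
    {k : ℕ} (hk : 1 ≤ k) {e : Fin n → ℤ} (he : e ∉ latticeCube n ((R + 2) * k))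
    {y : Fin n → ℝ} (hy : ‖y‖ ≤ 2) : β ((k : ℝ)⁻¹ • (y + Int.cast ∘ e)) = 0 := by
  have hk1 : (1 : ℝ) ≤ k := by exact_mod_cast hk
  have he' := add_one_le_norm_of_notMem_latticeCube he
  push_cast at he'
  apply hR
  rw [norm_smul, norm_inv, Real.norm_natCast, le_inv_mul_iff₀ (by positivity)]
  have h := norm_sub_norm_le (Int.cast ∘ e : Fin n → ℝ) (-y)
  rw [sub_neg_eq_add, add_comm, norm_neg] at h
  linarith

variable (hβ : Continuous β) (hβc : HasCompactSupport β) (hR : ∀ y, (R : ℝ) ≤ ‖y‖ → β y = 0)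
include hβ hβc hR

theorem pow_mul_integral_eq_setIntegral_box_sum {k : ℕ} (hk : 1 ≤ k) {x : Fin n → ℝ}
    (hx : x ∈ Box n) :
    (k : ℝ) ^ n * ∫ y, β y =
      ∫ u in Box n, ∑ e ∈ latticeCube n ((R + 2) * k), β ((k : ℝ)⁻¹ • (u + Int.cast ∘ e + x)) := by
  have hk0 : (0 : ℝ) < k := by exact_mod_cast hk
  calc (k : ℝ) ^ n * ∫ y, β y = ∫ u, β ((k : ℝ)⁻¹ • (u + x)) := by
        rw [integral_add_right_eq_self (fun u => β ((k : ℝ)⁻¹ • u)) x,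
          Measure.integral_comp_inv_smul_of_nonneg volume β hk0.le, Module.finrank_fin_fun,
          smul_eq_mul]
    _ = _ := by
      refine integral_eq_setIntegral_box_sum measurable_id
        (fun e => measurePreserving_add_right volume _)
        (fun e => (MeasurableEquiv.addRight _).measurableEmbedding) (fun _ _ => rfl)
        (((hβ.integrable_of_hasCompactSupport hβc).comp_smul (inv_ne_zero hk0.ne')).comp_add_right
          x)
        fun e he u hu => ?_
      rw [add_right_comm]
      exact comp_smul_add_eq_zero_of_notMem_latticeCube hR hk he <|
        (norm_add_le u x).trans (by linarith [norm_le_one_of_mem_box hu, norm_le_one_of_mem_box hx])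

theorem abs_latticeCube_sum_sub_pow_mul_integral_le {k : ℕ} (hk : 1 ≤ k) {η : ℝ}
    (hη : ∀ a b, dist a b ≤ (k : ℝ)⁻¹ → |β a - β b| ≤ η) {x : Fin n → ℝ} (hx : x ∈ Box n) :
    |∑ e ∈ latticeCube n ((R + 2) * k), β ((k : ℝ)⁻¹ • (x + Int.cast ∘ e))
        - (k : ℝ) ^ n * ∫ y, β y| ≤ (latticeCube n ((R + 2) * k)).card * η := by
  set N := latticeCube n ((R + 2) * k)
  set S := ∑ e ∈ N, β ((k : ℝ)⁻¹ • (x + Int.cast ∘ e))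
  have hvol : volume (Box n) < ⊤ := by simp [volume_box]
  have hint : IntegrableOn
      (fun u => ∑ e ∈ N, β ((k : ℝ)⁻¹ • (u + Int.cast ∘ e + x))) (Box n) := by
    have : Continuous fun u => ∑ e ∈ N, β ((k : ℝ)⁻¹ • (u + Int.cast ∘ e + x)) := by fun_prop
    exact this.integrableOn_Icc.mono_set box_subset_Icc
  have hS : S = ∫ _ in Box n, S := by simp [measureReal_def, volume_box]
  rw [pow_mul_integral_eq_setIntegral_box_sum hβ hβc hR hk hx, hS,
    ← integral_sub (integrableOn_const (C := S) hvol.ne) hint, ← Real.norm_eq_abs]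
  refine (norm_setIntegral_le_of_norm_le_const (C := N.card * η) hvol fun u hu => ?_).trans_eq
    (by simp [measureReal_def, volume_box])
  rw [← Finset.sum_sub_distrib, ← nsmul_eq_mul]
  refine (norm_sum_le _ _).trans (Finset.sum_le_card_nsmul _ _ _ fun e _ => hη _ _ ?_)
  rw [dist_eq_norm, ← smul_sub, show x + Int.cast ∘ e - (u + Int.cast ∘ e + x) = -u by abel,
    norm_smul, norm_neg, norm_inv, Real.norm_natCast]
  exact mul_le_of_le_one_right (by positivity) (norm_le_one_of_mem_box hu)

theorem abs_latticeCube_sum_sub_integral_le {k : ℕ} (hk : 1 ≤ k) {η : ℝ}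
    (hη : ∀ a b, dist a b ≤ (k : ℝ)⁻¹ → |β a - β b| ≤ η) {x : Fin n → ℝ} (hx : x ∈ Box n) :
    |((k : ℝ) ^ n)⁻¹ * ∑ e ∈ latticeCube n ((R + 2) * k), β ((k : ℝ)⁻¹ • (x + Int.cast ∘ e))
        - ∫ y, β y| ≤ (3 * ((R : ℝ) + 2)) ^ n * η := by
  have hη0 : 0 ≤ η := by simpa using hη x x (by simp)
  have hkn : (0 : ℝ) < (k : ℝ) ^ n := by positivity
  calc _ = ((k : ℝ) ^ n)⁻¹ * |∑ e ∈ latticeCube n ((R + 2) * k),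
          β ((k : ℝ)⁻¹ • (x + Int.cast ∘ e)) - (k : ℝ) ^ n * ∫ y, β y| := by
        rw [← abs_of_pos (inv_pos.2 hkn), ← abs_mul, abs_of_pos (inv_pos.2 hkn), mul_sub,
          inv_mul_cancel_left₀ hkn.ne']
    _ ≤ ((k : ℝ) ^ n)⁻¹ * ((3 * ((R : ℝ) + 2)) ^ n * (k : ℝ) ^ n * η) := by
        gcongr
        exact (abs_latticeCube_sum_sub_pow_mul_integral_le hβ hβc hR hk hη hx).trans
          (by gcongr; exact card_latticeCube_le hk)
    _ = (3 * ((R : ℝ) + 2)) ^ n * η := by field_simp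

theorem tendstoUniformlyOn_latticeCube_sum :
    TendstoUniformlyOn
      (fun (k : ℕ) x => ((k : ℝ) ^ n)⁻¹ *
        ∑ e ∈ latticeCube n ((R + 2) * k), β ((k : ℝ)⁻¹ • (x + Int.cast ∘ e)))
      (fun _ => ∫ y, β y) atTop (Box n) := by
  rw [Metric.tendstoUniformlyOn_iff]
  intro ε hε
  set C := (3 * ((R : ℝ) + 2)) ^ n
  have hC : 0 < C := by positivity
  obtain ⟨δ, hδ, hβδ⟩ := Metric.uniformContinuous_iff.1
    (hβc.uniformContinuous_of_continuous hβ) (ε / (C + 1)) (by positivity)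
  have hkδ : ∀ᶠ k : ℕ in atTop, (k : ℝ)⁻¹ < δ :=
    (tendsto_inv_atTop_zero.comp tendsto_natCast_atTop_atTop).eventually (gt_mem_nhds hδ)
  filter_upwards [eventually_ge_atTop 1, hkδ] with k hk hkδ x hx
  rw [dist_comm, Real.dist_eq]
  calc _ ≤ C * (ε / (C + 1)) := abs_latticeCube_sum_sub_integral_le hβ hβc hR hk
          (fun a b hab => (hβδ (hab.trans_lt hkδ)).le) hx
    _ < ε := by
      rw [mul_div_assoc', div_lt_iff₀ (by positivity)]
      nlinarith

end LatticeSum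

theorem tendsto_setIntegral_mul_of_tendstoUniformlyOn {ι γ : Type*} [MeasurableSpace γ]
    {ν : Measure γ} {l : Filter ι} [l.IsCountablyGenerated] {s : Set γ} (hs : MeasurableSet s)
    {g : γ → ℝ} (hg : IntegrableOn g s ν) {F : ι → γ → ℝ}
    (hF : ∀ i, AEStronglyMeasurable (F i) (ν.restrict s)) {c : ℝ}
    (hFc : TendstoUniformlyOn F (fun _ => c) l s) :
    Tendsto (fun i => ∫ z in s, g z * F i z ∂ν) l (𝓝 ((∫ z in s, g z ∂ν) * c)) := by
  rw [← integral_mul_const]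
  refine tendsto_integral_filter_of_dominated_convergence (fun z => ‖g z‖ * (‖c‖ + 1))
    (.of_forall fun i => hg.aestronglyMeasurable.mul (hF i)) ?_ (hg.norm.mul_const _)
    (ae_restrict_of_forall_mem hs fun z hz => (hFc.tendsto_at hz).const_mul (g z))
  filter_upwards [(uniformContinuous_norm.comp_tendstoUniformlyOn hFc).eventually_forall_le
    (lt_add_one ‖c‖) fun _ _ => le_rfl] with i hi
  filter_upwards [ae_restrict_mem hs] with z hz
  rw [norm_mul]
  exact mul_le_mul_of_nonneg_left (hi z hz) (norm_nonneg _)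

theorem HasCompactSupport.fst_mul_snd {X Y M : Type*} [TopologicalSpace X] [TopologicalSpace Y]
    [MulZeroClass M] {f : X → M} {g : Y → M} (hf : HasCompactSupport f)
    (hg : HasCompactSupport g) : HasCompactSupport fun z : X × Y => f z.1 * g z.2 :=
  .intro' (hf.prod hg) ((isClosed_tsupport f).prod (isClosed_tsupport g)) fun z hz => by
    rcases not_and_or.1 hz with h | h
    · rw [image_eq_zero_of_notMem_tsupport h, zero_mul]
    · rw [image_eq_zero_of_notMem_tsupport h, mul_zero]

section Periodic

variable {X : Type*} [TopologicalSpace X] [MeasurableSpace X] [OpensMeasurableSpace X]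
  {μ : Measure (X × (Fin n → ℝ))} [IsLocallyFiniteMeasure μ] {α : X → ℝ}

theorem integrableOn_box_fst_mul (hα : Continuous α) (hαc : HasCompactSupport α)
    {ψ : X × (Fin n → ℝ) → ℝ} (hψ : Continuous ψ) :
    IntegrableOn (fun z => α z.1 * ψ z) (Prod.snd ⁻¹' Box n) μ := by
  have hK := hαc.prod (isCompact_Icc (a := (0 : Fin n → ℝ)) (b := 1))
  refine ContinuousOn.integrableOn_compact' hK
      ((isClosed_tsupport α).prod isClosed_Icc).measurableSet
      (by fun_prop : Continuous _).continuousOn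
    |>.of_forall_sdiff_eq_zero (measurable_snd measurableSet_box) fun z ⟨hz, hzK⟩ => ?_
  rw [image_eq_zero_of_notMem_tsupport fun h => hzK ⟨h, box_subset_Icc hz⟩, zero_mul]

variable (hper : ∀ e : Fin n → ℤ,
    MeasurePreserving (fun z : X × (Fin n → ℝ) => (z.1, z.2 + fun i => (e i : ℝ))) μ μ)
  (hα : Continuous α) (hαc : HasCompactSupport α)
  {β : (Fin n → ℝ) → ℝ} (hβ : Continuous β) (hβc : HasCompactSupport β)
include hper hα hαc hβ hβc

theorem integral_fst_mul_comp_smul_eq_setIntegral_box {R : ℕ}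
    (hR : ∀ y, (R : ℝ) ≤ ‖y‖ → β y = 0) {k : ℕ} (hk : 1 ≤ k) :
    ∫ z, α z.1 * β ((k : ℝ)⁻¹ • z.2) ∂μ =
      ∫ z in Prod.snd ⁻¹' Box n,
        α z.1 * ∑ e ∈ latticeCube n ((R + 2) * k), β ((k : ℝ)⁻¹ • (z.2 + Int.cast ∘ e)) ∂μ := by
  have hk0 : (k : ℝ)⁻¹ ≠ 0 := by positivity
  simp_rw [Finset.mul_sum]
  refine integral_eq_setIntegral_box_sum measurable_snd hper
    (fun e => (MeasurableEquiv.prodCongr (.refl X) (.addRight _)).measurableEmbedding)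
    (fun _ _ => rfl) ?_ fun e he z hz => ?_
  · exact (by fun_prop : Continuous fun z : X × (Fin n → ℝ) => α z.1 * β ((k : ℝ)⁻¹ • z.2))
      |>.integrable_of_hasCompactSupport
        (hαc.fst_mul_snd (hβc.comp_homeomorph (Homeomorph.smulOfNeZero _ hk0)))
  · exact mul_eq_zero_of_right _ (comp_smul_add_eq_zero_of_notMem_latticeCube hR hk he
      ((norm_le_one_of_mem_box hz).trans one_le_two))

theorem tendsto_pow_inv_mul_integral_fst_mul_comp_smul :
    Tendsto (fun k : ℕ => ((k : ℝ) ^ n)⁻¹ * ∫ z, α z.1 * β ((k : ℝ)⁻¹ • z.2) ∂μ) atTop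
      (𝓝 ((∫ z in Prod.snd ⁻¹' Box n, α z.1 ∂μ) * ∫ y, β y)) := by
  obtain ⟨R, hR⟩ := hβc.exists_nat_forall_le_norm
  refine (tendsto_setIntegral_mul_of_tendstoUniformlyOn (measurable_snd measurableSet_box)
    (by simpa using integrableOn_box_fst_mul (μ := μ) hα hαc continuous_one)
    (fun k => by fun_prop) ((tendstoUniformlyOn_latticeCube_sum hβ hβc hR).comp Prod.snd)).congr' ?_
  filter_upwards [eventually_ge_atTop 1] with k hk
  rw [integral_fst_mul_comp_smul_eq_setIntegral_box hper hα hαc hβ hβc hR hk,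
    ← integral_const_mul]
  simp only [Function.comp_apply, mul_left_comm]

end Periodic

end

/-- Averaging property of an `x`-periodic locally finite nonnegative measure `μ` on
`ℝ_+ × ℝ^n`: `k^{-n} ⟨μ, α(t) β(x/k)⟩ → ∫_{ℝ_+ × 𝕋^n} α(t) dμ` for `α ∈ C₀(ℝ_+)`,
`β ∈ C₀(ℝ^n)` with `∫ β = 1`. -/
theorem periodic_measure_scaling_limit {n : ℕ} (μ : Measure (ℝ × (Fin n → ℝ)))
    [IsLocallyFiniteMeasure μ]
    (hper : ∀ e : Fin n → ℤ,
      MeasurePreserving (fun z : ℝ × (Fin n → ℝ) => (z.1, z.2 + fun i => (e i : ℝ))) μ μ)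
    (α : ℝ → ℝ) (hα : Continuous α) (hαc : HasCompactSupport α)
    (hαsupp : tsupport α ⊆ Set.Ioi 0)
    (β : (Fin n → ℝ) → ℝ) (hβ : Continuous β) (hβc : HasCompactSupport β)
    (hβint : (∫ y, β y) = 1) :
    Tendsto (fun k : ℕ => ((k : ℝ) ^ n)⁻¹ *
        ∫ z, α z.1 * β (fun i => z.2 i / k) ∂μ) atTop
      (nhds (∫ z in (Set.Ioi (0:ℝ)) ×ˢ Box n, α z.1 ∂μ)) := by
  have hsupp : ∫ z in Prod.snd ⁻¹' Box n, α z.1 ∂μ = ∫ z in Set.Ioi 0 ×ˢ Box n, α z.1 ∂μ :=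
    setIntegral_eq_of_subset_of_forall_sdiff_eq_zero (measurable_snd measurableSet_box)
      (fun z hz => hz.2) fun z ⟨hz, hzD⟩ =>
        image_eq_zero_of_notMem_tsupport fun h => hzD ⟨hαsupp h, hz⟩
  have hscale (k : ℕ) (x : Fin n → ℝ) : (fun i => x i / k) = (k : ℝ)⁻¹ • x := by
    ext i
    simp [div_eq_inv_mul]
  simpa [hscale, hsupp, hβint] using
    tendsto_pow_inv_mul_integral_fst_mul_comp_smul hper hα hαc hβ hβc
end

section
/- Let $\varphi \in C(\mathbb{R}, \mathbb{R}^n)$, $a: \mathbb{R} \to \mathbb{R}^{n\times n}$ measurable bounded, $c \in \mathbb{R}^n$, $\delta > 0$, $I \in \mathbb{R}$, and $\xi \in \mathbb{R}^n$ with $\xi \ne 0$. Suppose on the interval $(I - \delta, I + \delta)$: $\xi \cdot \varphi(u) - (c \cdot \xi) u$ is constant and $a(u)\xi\cdot\xi \equiv 0$ with $a(u) \ge 0$ symmetric (hence $a(u)\xi = 0$). Then the function $u(t,x) = I + \delta \sin(2\pi(\xi \cdot x - (c\cdot\xi) t))$ is a classical (distributional) solution of $u_t + \mathrm{div}_x(\varphi(u)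 - a(u)\nabla_x u) = 0$, and $\int_{\mathbb{T}^n} |u(t,x) - I|\,dx$ does not tend to $0$ as $t \to \infty$ when $\xi$ lies in the dual lattice of the period lattice. -/
open MeasureTheory Filter

/-- The travelling wave `u(t,x) = I + δ sin(2π(ξ·x - (c·ξ) t))`. -/
noncomputable def travellingWave {n : ℕ} (I δ : ℝ) (ξ c : Fin n → ℝ) (t : ℝ) (x : Fin n → ℝ) : ℝ :=
  I + δ * Real.sin (2 * Real.pi * ((∑ i, ξ i * x i) - (∑ i, c i * ξ i) * t))

lemma key_transport {E : Type*} [NormedAddCommGroup E] [NormedSpace ℝ E]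
    [MeasurableSpace E] [BorelSpace E] [FiniteDimensional ℝ E]
    (μ : Measure E) [μ.IsAddHaarMeasure]
    {f : E → ℝ} (hf : ContDiff ℝ (⊤ : ℕ∞) f) (h'f : HasCompactSupport f)
    {h : E → ℝ} (hh : Continuous h) {v : E} (hinv : ∀ (z : E) (t : ℝ), h (z + t • v) = h z) :
    ∫ z, h z * fderiv ℝ f z v ∂μ = 0 := by
  obtain ⟨C, hC⟩ : ∃ C, LipschitzWith C f :=
    hf.lipschitzWith_of_hasCompactSupport h'f (by simp)
  have A := LipschitzWith.integral_inv_smul_sub_mul_tendsto_integral_lineDeriv_mul'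
    (μ := μ) hC h'f hh v
  have B : ∀ t : ℝ, ∫ x, (t⁻¹ • (f (x + t • v) - f x)) * h x ∂μ = 0 := by
    intro t
    have I1 : Integrable (fun x => f (x + t • v) * h x) μ := by
      apply Continuous.integrable_of_hasCompactSupport
      · exact (hf.continuous.comp (continuous_add_right _)).mul hh
      · exact (h'f.comp_homeomorph (Homeomorph.addRight (t • v))).mul_right
    have I2 : Integrable (fun x => f x * h x) μ :=
      (hf.continuous.mul hh).integrable_of_hasCompactSupport h'f.mul_right
    have S : ∫ x, f (x + t • v) * h x ∂μ = ∫ x, f x * h x ∂μ := by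
      have T := integral_add_right_eq_self (μ := μ) (fun x => f x * h x) (t • v)
      simp only [hinv] at T
      exact T
    simp only [smul_eq_mul, mul_assoc, sub_mul]
    rw [integral_const_mul, integral_sub I1 I2, S, sub_self, mul_zero]
  have A0 : Tendsto (fun (_ : ℝ) => (0:ℝ)) (nhdsWithin 0 (Set.Ioi 0))
      (nhds (∫ x, lineDeriv ℝ f x v * h x ∂μ)) := by
    simpa only [B] using A
  have h0 : (∫ x, lineDeriv ℝ f x v * h x ∂μ) = 0 := tendsto_nhds_unique A0 tendsto_const_nhds
  rw [← h0]
  apply integral_congr_ae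
  filter_upwards with x
  rw [((hf.differentiable (by simp)) x).lineDeriv_eq_fderiv, mul_comm]

theorem travelling_wave_part1 {n : ℕ}
    (φ : Fin n → ℝ → ℝ) (hφ : ∀ i, Continuous (φ i))
    (a : ℝ → Matrix (Fin n) (Fin n) ℝ)
    (hpsd : ∀ v : ℝ, (a v).PosSemidef)
    (c : Fin n → ℝ) (I δ : ℝ) (hδ : 0 < δ) (ξ : Fin n → ℝ) (hξ : ξ ≠ 0)
    (haff : ∀ v ∈ Set.Ioo (I - δ) (I + δ), ∀ w ∈ Set.Ioo (I - δ) (I + δ),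
      (∑ i, ξ i * φ i v) - (∑ i, c i * ξ i) * v
        = (∑ i, ξ i * φ i w) - (∑ i, c i * ξ i) * w)
    (hdeg : ∀ v ∈ Set.Ioo (I - δ) (I + δ), dotProduct ξ ((a v).mulVec ξ) = 0) :
    (∀ f : ℝ × (Fin n → ℝ) → ℝ, ContDiff ℝ (⊤ : ℕ∞) f → HasCompactSupport f →
      (∫ z : ℝ × (Fin n → ℝ),
        (travellingWave I δ ξ c z.1 z.2 * fderiv ℝ f z (1, 0)
          + ∑ i, (φ i (travellingWave I δ ξ c z.1 z.2)
              - ∑ j, a (travellingWave I δ ξ c z.1 z.2) i j *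
                  (δ * (2 * Real.pi) *
                    Real.cos (2 * Real.pi *
                      ((∑ l, ξ l * z.2 l) - (∑ l, c l * ξ l) * z.1)) * ξ j))
            * fderiv ℝ f z (0, Pi.single i 1))) = 0) := by
  intro f hf h'f
  set s : ℝ := ∑ i, c i * ξ i with hs
  set θ : ℝ × (Fin n → ℝ) → ℝ := fun z => (∑ l, ξ l * z.2 l) - s * z.1 with hθ
  set u : ℝ × (Fin n → ℝ) → ℝ := fun z => I + δ * Real.sin (2 * Real.pi * θ z) with hu
  have huw : ∀ z : ℝ × (Fin n → ℝ), travellingWave I δ ξ c z.1 z.2 = u z := fun z => rfl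
  have hθcont : Continuous θ := by
    apply Continuous.sub
    · exact continuous_finset_sum _ fun l _ =>
        continuous_const.mul ((continuous_apply l).comp continuous_snd)
    · exact continuous_const.mul continuous_fst
  have hucont : Continuous u :=
    continuous_const.add (continuous_const.mul
      ((Real.continuous_sin.comp (continuous_const.mul hθcont))))
  -- range of u
  have hrange : ∀ z, u z ∈ Set.Icc (I - δ) (I + δ) := by
    intro z
    have h1 := Real.neg_one_le_sin (2 * Real.pi * θ z)
    have h2 := Real.sin_le_one (2 * Real.pi * θ z)
    constructor <;> simp only [hu] <;> nlinarith
  -- constant K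
  have hIm : I ∈ Set.Ioo (I - δ) (I + δ) := by constructor <;> linarith
  set K : ℝ := (∑ i, ξ i * φ i I) - s * I with hK
  have hGconst : ∀ v ∈ Set.Icc (I - δ) (I + δ), (∑ i, ξ i * φ i v) - s * v = K := by
    intro v hv
    set G : ℝ → ℝ := fun v => (∑ i, ξ i * φ i v) - s * v with hG
    have hGcont : Continuous G := by
      apply Continuous.sub
      · exact continuous_finset_sum _ fun i _ => continuous_const.mul (hφ i)
      · exact continuous_const.mul continuous_id
    set v' : ℕ → ℝ := fun k => (1 - ((k:ℝ)+2)⁻¹) * v + ((k:ℝ)+2)⁻¹ * I with hv'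
    have hτ : ∀ k : ℕ, 0 < ((k:ℝ)+2)⁻¹ ∧ ((k:ℝ)+2)⁻¹ ≤ 1 := by
      intro k
      have hk2 : (0:ℝ) < (k:ℝ)+2 := by positivity
      constructor
      · positivity
      · rw [inv_le_one_iff₀]; right; linarith [Nat.cast_nonneg (α := ℝ) k]
    have hmem : ∀ k, v' k ∈ Set.Ioo (I - δ) (I + δ) := by
      intro k
      obtain ⟨h1, h2⟩ := hτ k
      obtain ⟨hv1, hv2⟩ := hv
      constructor <;> simp only [hv'] <;> nlinarith
    have hlim : Tendsto v' atTop (nhds v) := by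
      have h0 : Tendsto (fun k : ℕ => ((k:ℝ)+2)⁻¹) atTop (nhds 0) := by
        apply Filter.Tendsto.inv_tendsto_atTop
        exact tendsto_atTop_add_const_right atTop 2 tendsto_natCast_atTop_atTop
      have : Tendsto (fun k : ℕ => (1 - ((k:ℝ)+2)⁻¹) * v + ((k:ℝ)+2)⁻¹ * I) atTop
          (nhds ((1 - 0) * v + 0 * I)) :=
        ((tendsto_const_nhds.sub h0).mul tendsto_const_nhds).add (h0.mul tendsto_const_nhds)
      simpa using this
    have hGv : Tendsto (fun k => G (v' k)) atTop (nhds (G v)) :=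
      (hGcont.continuousAt.tendsto).comp hlim
    have hGv' : ∀ k, G (v' k) = K := fun k => haff (v' k) (hmem k) I hIm
    simp only [hGv'] at hGv
    have : G v = K := tendsto_nhds_unique hGv tendsto_const_nhds
    exact this
  -- N
  set N : ℝ := ∑ l, ξ l ^ 2 with hN
  have hNpos : 0 < N := by
    obtain ⟨i, hi⟩ := Function.ne_iff.mp hξ
    have : (0:ℝ) < ξ i ^ 2 := (sq_nonneg (ξ i)).lt_of_ne' (pow_ne_zero 2 hi)
    exact lt_of_lt_of_le this (Finset.single_le_sum (f := fun l => ξ l ^ 2)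
      (fun l _ => sq_nonneg _) (Finset.mem_univ i))
  -- diffusion term vanishes
  have hdiffzero : ∀ (z : ℝ × (Fin n → ℝ)) (i : Fin n),
      (∑ j, a (u z) i j * (δ * (2 * Real.pi) * Real.cos (2 * Real.pi * θ z) * ξ j)) = 0 := by
    intro z i
    by_cases hcos : Real.cos (2 * Real.pi * θ z) = 0
    · simp [hcos]
    · have hsin : Real.sin (2 * Real.pi * θ z) ∈ Set.Ioo (-1:ℝ) 1 := by
        have hpy := Real.sin_sq_add_cos_sq (2 * Real.pi * θ z)
        have hc2 : 0 < Real.cos (2 * Real.pi * θ z) ^ 2 := by positivity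
        constructor <;> nlinarith [Real.neg_one_le_sin (2 * Real.pi * θ z),
          Real.sin_le_one (2 * Real.pi * θ z)]
      have hmem : u z ∈ Set.Ioo (I - δ) (I + δ) := by
        obtain ⟨h1, h2⟩ := hsin
        constructor <;> simp only [hu] <;> nlinarith
      have h0 : (a (u z)).mulVec ξ = 0 :=
        ((hpsd (u z)).dotProduct_mulVec_zero_iff ξ).mp
          (by simpa using hdeg (u z) hmem)
      have h0i : ∑ j, a (u z) i j * ξ j = 0 := congrFun h0 i
      calc ∑ j, a (u z) i j * (δ * (2 * Real.pi) * Real.cos (2 * Real.pi * θ z) * ξ j)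
          = (δ * (2 * Real.pi) * Real.cos (2 * Real.pi * θ z)) *
              ∑ j, a (u z) i j * ξ j := by
            rw [Finset.mul_sum]; exact Finset.sum_congr rfl fun j _ => by ring
        _ = 0 := by rw [h0i, mul_zero]
  -- directions orthogonal to xi
  set wv : Fin n → (Fin n → ℝ) := fun i => Pi.single i 1 - (ξ i / N) • ξ with hwv
  set ψ : Fin n → (ℝ × (Fin n → ℝ)) → ℝ := fun i z => φ i (u z) - c i * u z with hψ
  have hψcont : ∀ i, Continuous (ψ i) := fun i =>
    ((hφ i).comp hucont).sub (continuous_const.mul hucont)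
  have hξw : ∀ i, ∑ l, ξ l * wv i l = 0 := by
    intro i
    simp only [hwv, Pi.sub_apply, Pi.smul_apply, smul_eq_mul, mul_sub, Finset.sum_sub_distrib]
    have h1 : ∑ l, ξ l * (Pi.single i 1 : Fin n → ℝ) l = ξ i := by
      simp [Pi.single_apply, mul_ite, Finset.sum_ite_eq']
    have h2 : ∑ l, ξ l * (ξ i / N * ξ l) = ξ i := by
      have h3 : ∀ l, ξ l * (ξ i / N * ξ l) = (ξ i / N) * ξ l ^ 2 := fun l => by ring
      rw [Finset.sum_congr rfl fun l _ => h3 l, ← Finset.mul_sum, ← hN]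
      field_simp
    rw [h1, h2, sub_self]
  -- invariances
  have hinv1 : ∀ (z : ℝ × (Fin n → ℝ)) (r : ℝ), u (z + r • ((1:ℝ), c)) = u z := by
    intro z r
    have hzz : z + r • ((1:ℝ), c) = (z.1 + r, z.2 + r • c) := by
      apply Prod.ext <;> simp
    rw [hzz]
    simp only [hu, hθ]
    have h1 : ∑ l, ξ l * (z.2 + r • c) l = (∑ l, ξ l * z.2 l) + r * ∑ l, c l * ξ l := by
      simp only [Pi.add_apply, Pi.smul_apply, smul_eq_mul, mul_add, Finset.sum_add_distrib]
      congr 1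
      rw [Finset.mul_sum]
      exact Finset.sum_congr rfl fun l _ => by ring
    rw [h1, ← hs]
    ring_nf
  have hinv2 : ∀ (i : Fin n) (z : ℝ × (Fin n → ℝ)) (r : ℝ),
      ψ i (z + r • ((0:ℝ), wv i)) = ψ i z := by
    intro i z r
    have hzz : z + r • ((0:ℝ), wv i) = (z.1, z.2 + r • wv i) := by
      apply Prod.ext <;> simp
    have huu : u (z + r • ((0:ℝ), wv i)) = u z := by
      rw [hzz]
      simp only [hu, hθ]
      have h1 : ∑ l, ξ l * (z.2 + r • wv i) l = (∑ l, ξ l * z.2 l) + r * ∑ l, ξ l * wv i l := by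
        simp only [Pi.add_apply, Pi.smul_apply, smul_eq_mul, mul_add, Finset.sum_add_distrib]
        congr 1
        rw [Finset.mul_sum]
        exact Finset.sum_congr rfl fun l _ => by ring
      rw [h1, hξw i]
      ring_nf
    simp only [hψ, huu]
  -- fderiv applied in a fixed direction: continuity and compact support
  have hDc : ∀ v : ℝ × (Fin n → ℝ), Continuous fun z => fderiv ℝ f z v := fun v =>
    (hf.continuous_fderiv (by simp)).clm_apply continuous_const
  have hDs : ∀ v : ℝ × (Fin n → ℝ), HasCompactSupport fun z => fderiv ℝ f z v := fun v =>
    (h'f.fderiv ℝ).comp_left (g := fun L : (ℝ × (Fin n → ℝ)) →L[ℝ] ℝ => L v) rfl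
  -- pointwise identity
  have hintegrand : ∀ z : ℝ × (Fin n → ℝ),
      travellingWave I δ ξ c z.1 z.2 * fderiv ℝ f z (1, 0)
        + ∑ i, (φ i (travellingWave I δ ξ c z.1 z.2)
            - ∑ j, a (travellingWave I δ ξ c z.1 z.2) i j *
                (δ * (2 * Real.pi) *
                  Real.cos (2 * Real.pi * ((∑ l, ξ l * z.2 l) - s * z.1)) * ξ j))
          * fderiv ℝ f z (0, Pi.single i 1)
      = u z * fderiv ℝ f z (1, c) + (K / N) * fderiv ℝ f z (0, ξ)
        + ∑ i, ψ i z * fderiv ℝ f z (0, wv i) := by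
    intro z
    simp only [huw]
    have hd : ∀ i : Fin n, φ i (u z)
        - (∑ j, a (u z) i j *
            (δ * (2 * Real.pi) *
              Real.cos (2 * Real.pi * ((∑ l, ξ l * z.2 l) - s * z.1)) * ξ j)) = φ i (u z) := by
      intro i
      have h := hdiffzero z i
      simp only [hθ] at h
      rw [h, sub_zero]
    simp only [hd]
    -- expansion in the canonical basis
    have hexp : ∀ y : Fin n → ℝ,
        fderiv ℝ f z ((0:ℝ), y) = ∑ i, y i * fderiv ℝ f z ((0:ℝ), Pi.single i 1) := by
      intro y
      have hy : ((0:ℝ), y) = ∑ i, y i • (((0:ℝ), (Pi.single i 1 : Fin n → ℝ)) : ℝ × (Fin n → ℝ)) := by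
        apply Prod.ext
        · rw [Prod.fst_sum]; simp
        · rw [Prod.snd_sum]
          simp only [Prod.smul_mk]
          have h2 : ∀ i, y i • (Pi.single i 1 : Fin n → ℝ) = (Pi.single i (y i) : Fin n → ℝ) :=
            fun i => by rw [← Pi.single_smul, smul_eq_mul, mul_one]
          simp only [h2, Finset.univ_sum_single]
      rw [hy, map_sum]
      simp only [_root_.map_smul, smul_eq_mul]
    have e1 : fderiv ℝ f z (1, c)
        = fderiv ℝ f z (1, 0) + ∑ i, c i * fderiv ℝ f z ((0:ℝ), Pi.single i 1) := by
      have h : ((1:ℝ), c) = ((1:ℝ), (0:Fin n → ℝ)) + ((0:ℝ), c) := by simp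
      rw [h, map_add, hexp c]
    have e2 : fderiv ℝ f z ((0:ℝ), ξ) = ∑ l, ξ l * fderiv ℝ f z ((0:ℝ), Pi.single l 1) :=
      hexp ξ
    have e3 : ∀ i, fderiv ℝ f z ((0:ℝ), wv i)
        = fderiv ℝ f z ((0:ℝ), Pi.single i 1)
          - ξ i / N * ∑ l, ξ l * fderiv ℝ f z ((0:ℝ), Pi.single l 1) := by
      intro i
      rw [hexp (wv i)]
      have h : ∀ l, wv i l = (Pi.single i 1 : Fin n → ℝ) l - ξ i / N * ξ l := fun l => by
        simp [hwv]
      simp only [h, sub_mul, Finset.sum_sub_distrib]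
      congr 1
      · simp [Pi.single_apply, ite_mul, Finset.sum_ite_eq']
      · rw [Finset.mul_sum]
        exact Finset.sum_congr rfl fun l _ => by ring
    have e4 : ∑ i, ξ i * ψ i z = K := by
      have h := hGconst (u z) (hrange z)
      calc ∑ i, ξ i * ψ i z = (∑ i, ξ i * φ i (u z)) - s * u z := by
            simp only [hψ, mul_sub, Finset.sum_sub_distrib]
            congr 1
            rw [hs, Finset.sum_mul]
            exact Finset.sum_congr rfl fun i _ => by ring
        _ = K := h
    rw [e1, e2]
    simp only [e3]
    have e5 : ∑ i, ψ i z * (fderiv ℝ f z ((0:ℝ), Pi.single i 1)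
            - ξ i / N * ∑ l, ξ l * fderiv ℝ f z ((0:ℝ), Pi.single l 1))
        = (∑ i, ψ i z * fderiv ℝ f z ((0:ℝ), Pi.single i 1))
          - K / N * ∑ l, ξ l * fderiv ℝ f z ((0:ℝ), Pi.single l 1) := by
      have h : ∀ i, ψ i z * (fderiv ℝ f z ((0:ℝ), Pi.single i 1)
            - ξ i / N * ∑ l, ξ l * fderiv ℝ f z ((0:ℝ), Pi.single l 1))
          = ψ i z * fderiv ℝ f z ((0:ℝ), Pi.single i 1)
            - (ξ i * ψ i z) * ((∑ l, ξ l * fderiv ℝ f z ((0:ℝ), Pi.single l 1)) / N) :=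
        fun i => by ring
      simp only [h, Finset.sum_sub_distrib, ← Finset.sum_mul, e4]
      ring
    rw [e5]
    have e6 : u z * (fderiv ℝ f z (1, 0) + ∑ i, c i * fderiv ℝ f z ((0:ℝ), Pi.single i 1))
        = u z * fderiv ℝ f z (1, 0)
          + ∑ i, (c i * u z) * fderiv ℝ f z ((0:ℝ), Pi.single i 1) := by
      rw [mul_add, Finset.mul_sum]
      congr 1
      exact Finset.sum_congr rfl fun i _ => by ring
    rw [e6]
    have e7 : ∑ i, φ i (u z) * fderiv ℝ f z ((0:ℝ), Pi.single i 1)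
        = ∑ i, ((c i * u z) * fderiv ℝ f z ((0:ℝ), Pi.single i 1)
            + ψ i z * fderiv ℝ f z ((0:ℝ), Pi.single i 1)) := by
      exact Finset.sum_congr rfl fun i _ => by simp only [hψ]; ring
    rw [e7, Finset.sum_add_distrib]
    ring
  -- integrability
  have IntA : Integrable (fun z : ℝ × (Fin n → ℝ) => u z * fderiv ℝ f z (1, c)) :=
    (hucont.mul (hDc _)).integrable_of_hasCompactSupport ((hDs _).mul_left)
  have IntB : Integrable (fun z : ℝ × (Fin n → ℝ) => (K / N) * fderiv ℝ f z ((0:ℝ), ξ)) :=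
    (continuous_const.mul (hDc _)).integrable_of_hasCompactSupport ((hDs _).mul_left)
  have IntC : ∀ i, Integrable
      (fun z : ℝ × (Fin n → ℝ) => ψ i z * fderiv ℝ f z ((0:ℝ), wv i)) := fun i =>
    ((hψcont i).mul (hDc _)).integrable_of_hasCompactSupport ((hDs _).mul_left)
  have IntCs : Integrable (fun z : ℝ × (Fin n → ℝ) =>
      ∑ i, ψ i z * fderiv ℝ f z ((0:ℝ), wv i)) :=
    integrable_finset_sum _ fun i _ => IntC i
  have IntBC : Integrable (fun z : ℝ × (Fin n → ℝ) =>
      (K / N) * fderiv ℝ f z ((0:ℝ), ξ) + ∑ i, ψ i z * fderiv ℝ f z ((0:ℝ), wv i)) :=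
    IntB.add IntCs
  haveI hHaar : (volume : Measure (ℝ × (Fin n → ℝ))).IsAddHaarMeasure :=
    Measure.prod.instIsAddHaarMeasure volume volume
  have Z1 : ∫ z : ℝ × (Fin n → ℝ), u z * fderiv ℝ f z (1, c) = 0 :=
    key_transport volume hf h'f hucont hinv1
  have Z2 : ∫ z : ℝ × (Fin n → ℝ), (K / N) * fderiv ℝ f z ((0:ℝ), ξ) = 0 :=
    key_transport volume hf h'f continuous_const (fun _ _ => rfl)
  have Z3 : ∀ i, ∫ z : ℝ × (Fin n → ℝ), ψ i z * fderiv ℝ f z ((0:ℝ), wv i) = 0 := fun i =>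
    key_transport volume hf h'f (hψcont i) (hinv2 i)
  calc ∫ z : ℝ × (Fin n → ℝ),
        (travellingWave I δ ξ c z.1 z.2 * fderiv ℝ f z (1, 0)
          + ∑ i, (φ i (travellingWave I δ ξ c z.1 z.2)
              - ∑ j, a (travellingWave I δ ξ c z.1 z.2) i j *
                  (δ * (2 * Real.pi) *
                    Real.cos (2 * Real.pi *
                      ((∑ l, ξ l * z.2 l) - s * z.1)) * ξ j))
            * fderiv ℝ f z (0, Pi.single i 1))
      = ∫ z : ℝ × (Fin n → ℝ),
          (u z * fderiv ℝ f z (1, c) + ((K / N) * fderiv ℝ f z ((0:ℝ), ξ)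
            + ∑ i, ψ i z * fderiv ℝ f z ((0:ℝ), wv i))) := by
        apply integral_congr_ae
        filter_upwards with z
        rw [hintegrand z, add_assoc]
    _ = (∫ z : ℝ × (Fin n → ℝ), u z * fderiv ℝ f z (1, c))
        + ((∫ z : ℝ × (Fin n → ℝ), (K / N) * fderiv ℝ f z ((0:ℝ), ξ))
          + ∫ z : ℝ × (Fin n → ℝ), ∑ i, ψ i z * fderiv ℝ f z ((0:ℝ), wv i)) := by
        rw [integral_add IntA IntBC, integral_add IntB IntCs]
    _ = 0 := by
        rw [Z1, Z2, integral_finset_sum _ (fun i _ => IntC i)]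
        simp only [Z3]
        simp

theorem travelling_wave_part2 {n : ℕ}
    (c : Fin n → ℝ) (I δ : ℝ) (hδ : 0 < δ) (ξ : Fin n → ℝ) (hξ : ξ ≠ 0)
    (hint : ∀ i, ∃ m : ℤ, ξ i = m) :
    ¬ Tendsto (fun t : ℝ =>
        ∫ x in Box n, |travellingWave I δ ξ c t x - I|) atTop (nhds 0) := by
  intro hT
  set s : ℝ := ∑ i, c i * ξ i with hs
  set g : (Fin n → ℝ) → ℝ := fun x => |δ * Real.sin (2 * Real.pi * ∑ l, ξ l * x l)| with hg
  have hgc : Continuous g := by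
    apply Continuous.abs
    exact continuous_const.mul (Real.continuous_sin.comp (continuous_const.mul
      (continuous_finset_sum _ fun l _ => continuous_const.mul (continuous_apply l))))
  set J : ℝ := ∫ x in Box n, g x with hJdef
  -- the integral takes the value J whenever s * t is an integer
  have hF : ∀ t : ℝ, (∃ m : ℤ, s * t = m) →
      (∫ x in Box n, |travellingWave I δ ξ c t x - I|) = J := by
    rintro t ⟨m, hm⟩
    have hfun : (fun x => |travellingWave I δ ξ c t x - I|) = g := by
      funext x
      simp only [travellingWave, hg, ← hs]
      have harg : 2 * Real.pi * ((∑ i, ξ i * x i) - s * t)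
          = 2 * Real.pi * (∑ i, ξ i * x i) - (m : ℝ) * (2 * Real.pi) := by
        rw [← hm]; ring
      rw [add_sub_cancel_left, harg, Real.sin_sub_int_mul_two_pi]
    rw [hfun]
  -- a sequence of times going to infinity with s * t integral
  have hseq : ∃ (tk : ℕ → ℝ), Tendsto tk atTop atTop ∧ ∀ k, ∃ m : ℤ, s * tk k = m := by
    rcases eq_or_ne s 0 with h0 | h0
    · exact ⟨fun k => k, tendsto_natCast_atTop_atTop,
        fun k => ⟨0, by rw [h0]; simp⟩⟩
    · refine ⟨fun k => k / |s|, ?_, ?_⟩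
      · exact Tendsto.atTop_div_const (abs_pos.mpr h0) tendsto_natCast_atTop_atTop
      · intro k
        rcases lt_or_gt_of_ne h0 with hneg | hpos
        · refine ⟨-k, ?_⟩
          rw [abs_of_neg hneg]
          push_cast
          field_simp [h0]
        · refine ⟨k, ?_⟩
          rw [abs_of_pos hpos]
          field_simp
          norm_cast
  obtain ⟨tk, htk, hintk⟩ := hseq
  have hcomp : Tendsto (fun k => ∫ x in Box n, |travellingWave I δ ξ c (tk k) x - I|)
      atTop (nhds 0) := hT.comp htk
  have hconst : ∀ k, (∫ x in Box n, |travellingWave I δ ξ c (tk k) x - I|) = J :=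
    fun k => hF (tk k) (hintk k)
  simp only [hconst] at hcomp
  have hJ0 : J = 0 := (tendsto_nhds_unique hcomp tendsto_const_nhds).symm
  -- but J > 0
  have hBoxm : MeasurableSet (Box n) := MeasurableSet.univ_pi fun _ => measurableSet_Ico
  have hfin : volume (Box n) < ⊤ := by
    rw [Box, volume_pi_pi]
    simp [Real.volume_Ico]
  haveI : IsFiniteMeasure (volume.restrict (Box n)) :=
    ⟨by rwa [Measure.restrict_apply_univ]⟩
  have hInt : IntegrableOn g (Box n) := by
    apply Integrable.mono' (integrable_const δ) hgc.aestronglyMeasurable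
    filter_upwards with x
    rw [Real.norm_eq_abs, hg, abs_abs, abs_mul, abs_of_pos hδ]
    calc δ * |Real.sin (2 * Real.pi * ∑ l, ξ l * x l)| ≤ δ * 1 := by
          exact mul_le_mul_of_nonneg_left (Real.abs_sin_le_one _) hδ.le
      _ = δ := mul_one δ
  -- the special point
  obtain ⟨i₀, hi₀0⟩ := Function.ne_iff.mp hξ
  have hi₀ : ξ i₀ ≠ 0 := by simpa using hi₀0
  choose m hm using hint
  set xs : Fin n → ℝ := fun i => if i = i₀ then 1/2 + 1/(8 * ξ i₀) else 1/2 with hxs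
  have hbound : ∀ i, 3/8 ≤ xs i ∧ xs i ≤ 5/8 := by
    intro i
    by_cases hii : i = i₀
    · have h1 : |ξ i₀| ≥ 1 := by
        rw [hm i₀]
        rw [← Int.cast_abs]
        have hmne : m i₀ ≠ 0 := by
          intro h
          apply hi₀
          rw [hm i₀, h, Int.cast_zero]
        exact_mod_cast Int.one_le_abs hmne
      have h2 : |1/(8 * ξ i₀)| ≤ 1/8 := by
        rw [abs_div, abs_mul]
        simp only [abs_one]
        rw [div_le_div_iff₀ (by positivity) (by norm_num)]
        simp only [Nat.abs_ofNat]
        nlinarith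
      have h3 := abs_le.mp h2
      simp only [hxs, hii, if_pos rfl]
      constructor <;> linarith [h3.1, h3.2]
    · simp only [hxs, if_neg hii]
      norm_num
  have hdot : ∑ l, ξ l * xs l = (∑ l, ξ l)/2 + 1/8 := by
    have split : ∀ l, ξ l * xs l = ξ l * (1/2) + (if l = i₀ then (1:ℝ)/8 else 0) := by
      intro l
      by_cases hl : l = i₀
      · subst hl
        simp only [hxs, if_pos rfl, if_true]
        field_simp
      · simp [hxs, hl]
    rw [Finset.sum_congr rfl fun l _ => split l, Finset.sum_add_distrib]
    simp only [Finset.sum_ite_eq', Finset.mem_univ, if_true]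
    rw [Finset.sum_div]
    congr 1
    exact Finset.sum_congr rfl fun l _ => by ring
  have hSM : (∑ l, ξ l) = ((∑ l, m l : ℤ) : ℝ) := by
    push_cast
    exact Finset.sum_congr rfl fun l _ => hm l
  have hgxs : g xs ≠ 0 := by
    have harg : 2 * Real.pi * (∑ l, ξ l * xs l)
        = ((∑ l, m l : ℤ) : ℝ) * Real.pi - (-(Real.pi/4)) := by
      rw [hdot, hSM]; ring
    rw [hg]
    simp only
    rw [harg, Real.sin_int_mul_pi_sub, Real.sin_neg, Real.sin_pi_div_four]
    have : (0:ℝ) < Real.sqrt 2 / 2 := by positivity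
    apply abs_ne_zero.mpr
    apply mul_ne_zero (ne_of_gt hδ)
    simp only [mul_neg, neg_neg]
    exact mul_ne_zero (zpow_ne_zero _ (by norm_num : (-1:ℝ) ≠ 0)) (ne_of_gt this)
  -- a small ball around xs inside both the support of g and the Box
  have hopen : IsOpen (Function.support g) := hgc.isOpen_support
  obtain ⟨r₁, hr₁pos, hr₁⟩ := Metric.isOpen_iff.mp hopen xs hgxs
  set r : ℝ := min r₁ (1/4) with hr
  have hrpos : 0 < r := lt_min hr₁pos (by norm_num)
  have hball_supp : Metric.ball xs r ⊆ Function.support g :=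
    fun y hy => hr₁ (Metric.ball_subset_ball (min_le_left _ _) hy)
  have hball_box : Metric.ball xs r ⊆ Box n := by
    intro y hy
    intro i _
    have hdi : dist (y i) (xs i) ≤ dist y xs := dist_le_pi_dist y xs i
    have hlt : dist (y i) (xs i) < 1/4 :=
      lt_of_le_of_lt hdi (lt_of_lt_of_le hy (min_le_right _ _))
    rw [Real.dist_eq] at hlt
    have := abs_lt.mp hlt
    obtain ⟨hb1, hb2⟩ := hbound i
    constructor
    · linarith [this.1]
    · linarith [this.2]
  have hpos : 0 < J := by
    rw [hJdef]
    rw [setIntegral_pos_iff_support_of_nonneg_ae ?_ hInt]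
    · apply lt_of_lt_of_le (Metric.measure_ball_pos volume xs hrpos)
      apply measure_mono
      exact fun y hy => ⟨hball_supp hy, hball_box hy⟩
    · filter_upwards with x
      exact abs_nonneg _
  exact absurd hJ0 (ne_of_gt hpos)

/-- Sharpness of the nonlinearity-diffusivity condition: if on `(I-δ, I+δ)` the
function `ξ·φ(u) - (c·ξ)u` is constant and `a(u)ξ·ξ ≡ 0` with `a(u) ⪰ 0` symmetric
(hence `a(u)ξ = 0`), then `u(t,x) = I + δ sin(2π(ξ·x - (c·ξ)t))` is a distributional
solution of `u_t + div_x(φ(u) - a(u)∇_x u) = 0`, and when `ξ` lies in the dual lattice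
`ℤ^n`, the quantity `∫_{𝕋^n} |u(t,x) - I| dx` does not tend to `0` as `t → ∞`. -/
theorem travelling_wave_counterexample {n : ℕ}
    (φ : Fin n → ℝ → ℝ) (hφ : ∀ i, Continuous (φ i))
    (a : ℝ → Matrix (Fin n) (Fin n) ℝ)
    (ham : ∀ i j, Measurable fun v => a v i j)
    (hab : ∃ Ca : ℝ, ∀ v i j, |a v i j| ≤ Ca)
    (hpsd : ∀ v : ℝ, (a v).PosSemidef)
    (c : Fin n → ℝ) (I δ : ℝ) (hδ : 0 < δ) (ξ : Fin n → ℝ) (hξ : ξ ≠ 0)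
    (haff : ∀ v ∈ Set.Ioo (I - δ) (I + δ), ∀ w ∈ Set.Ioo (I - δ) (I + δ),
      (∑ i, ξ i * φ i v) - (∑ i, c i * ξ i) * v
        = (∑ i, ξ i * φ i w) - (∑ i, c i * ξ i) * w)
    (hdeg : ∀ v ∈ Set.Ioo (I - δ) (I + δ), dotProduct ξ ((a v).mulVec ξ) = 0) :
    (∀ f : ℝ × (Fin n → ℝ) → ℝ, ContDiff ℝ (⊤ : ℕ∞) f → HasCompactSupport f →
      (∫ z : ℝ × (Fin n → ℝ),
        (travellingWave I δ ξ c z.1 z.2 * fderiv ℝ f z (1, 0)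
          + ∑ i, (φ i (travellingWave I δ ξ c z.1 z.2)
              - ∑ j, a (travellingWave I δ ξ c z.1 z.2) i j *
                  (δ * (2 * Real.pi) *
                    Real.cos (2 * Real.pi *
                      ((∑ l, ξ l * z.2 l) - (∑ l, c l * ξ l) * z.1)) * ξ j))
            * fderiv ℝ f z (0, Pi.single i 1))) = 0)
    ∧ ((∀ i, ∃ m : ℤ, ξ i = m) →
        ¬ Tendsto (fun t : ℝ =>
            ∫ x in Box n, |travellingWave I δ ξ c t x - I|) atTop (nhds 0)) := by
  constructor
  · exact travelling_wave_part1 φ hφ a hpsd c I δ hδ ξ hξ haff hdeg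
  · exact fun hint => travelling_wave_part2 c I δ hδ ξ hξ hint
end
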